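/- arXiv:2208.07215 — 3 statements merged into one kernel-verified Lean document; each statement's English description precedes it below -/
import Mathlib

section
/- Let M be an Orlicz function, p ≥ 1, ε > 0, and h > 0 such that M(x)·y^{p+ε}/M(xy) > h for all x, y ≥ 1. Suppose L : (0,1] → (0,∞) satisfies L(s) = lim_{n→∞} M(s·tₙ)/M(tₙ) for a sequence tₙ ↑ ∞ (with tₙ ≥ 1) and all 0 < s ≤ 1. Then L(uv)/(v^{p+ε}·L(u)) ≥ h for all 0 < u, v ≤ 1. -/
open Filter Set Real

theorem stmt_2 (M : ℝ → ℝ) (p ε h : ℝ) (L : ℝ → ℝ) (t : ℕ → ℝ)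
    (hM_mono : MonotoneOn M (Set.Ici 0))
    (hM_conv : ConvexOn ℝ (Set.Ici 0) M)
    (hM_cont : ContinuousOn M (Set.Ici 0))
    (hM0 : M 0 = 0)
    (hM_inf : Tendsto M atTop atTop)
    (hp : 1 ≤ p) (hε : 0 < ε) (hh : 0 < h)
    (hM_est : ∀ x : ℝ, 1 ≤ x → ∀ y : ℝ, 1 ≤ y → M x * y ^ (p + ε) / M (x * y) > h)
    (ht_mono : Monotone t)
    (ht_ge : ∀ n, 1 ≤ t n)
    (ht_inf : Tendsto t atTop atTop)
    (hL : ∀ s ∈ Set.Ioc (0:ℝ) 1,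
      Tendsto (fun n => M (s * t n) / M (t n)) atTop (nhds (L s))) :
    ∀ u ∈ Set.Ioc (0:ℝ) 1, ∀ v ∈ Set.Ioc (0:ℝ) 1,
      L (u * v) / (v ^ (p + ε) * L u) ≥ h := by
  have hMnn : ∀ x : ℝ, 0 ≤ x → 0 ≤ M x := fun x hx => by
    have := hM_mono (Set.self_mem_Ici) (Set.mem_Ici.mpr hx) hx
    rwa [hM0] at this
  have hMx : ∀ x : ℝ, 1 ≤ x → 0 < M x := by
    intro x hx
    rcases (hMnn x (by linarith)).lt_or_eq with h2 | h2
    · exact h2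
    · exfalso
      have h1 := hM_est x hx 1 le_rfl
      rw [mul_one, ← h2] at h1
      simp at h1
      linarith
  have key : ∀ x : ℝ, 1 ≤ x → ∀ y : ℝ, 1 ≤ y → h * M (x * y) < M x * y ^ (p + ε) := by
    intro x hx y hy
    have h1 := hM_est x hx y hy
    have hMxy := hMx (x * y) (by nlinarith)
    exact (lt_div_iff₀ hMxy).mp h1
  have ratio : ∀ s : ℝ, 0 < s → s ≤ 1 → ∀ z : ℝ, 1 ≤ s * z →
      h * s ^ (p + ε) * M z < M (s * z) := by
    intro s hs hs1 z hsz
    have hy : (1 : ℝ) ≤ 1 / s := by rw [le_div_iff₀ hs]; linarith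
    have hk := key (s * z) hsz (1 / s) hy
    have hxy : s * z * (1 / s) = z := by field_simp
    rw [hxy] at hk
    have hpow : (1 / s) ^ (p + ε) = (s ^ (p + ε))⁻¹ := by
      rw [one_div, Real.inv_rpow hs.le]
    rw [hpow] at hk
    have hps : 0 < s ^ (p + ε) := Real.rpow_pos_of_pos hs _
    calc h * s ^ (p + ε) * M z = (h * M z) * s ^ (p + ε) := by ring
      _ < (M (s * z) * (s ^ (p + ε))⁻¹) * s ^ (p + ε) := mul_lt_mul_of_pos_right hk hps
      _ = M (s * z) := by field_simp
  have ratio' : ∀ s : ℝ, 0 < s → s ≤ 1 → h * s ^ (p + ε) ≤ L s := by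
    intro s hs hs1
    refine ge_of_tendsto (hL s ⟨hs, hs1⟩) ?_
    filter_upwards [ht_inf.eventually_ge_atTop (1 / s)] with n hn
    have htn := ht_ge n
    have hsz : 1 ≤ s * t n := by
      have := (div_le_iff₀ hs).mp hn
      linarith [this]
    have hMt := hMx (t n) htn
    have := ratio s hs hs1 (t n) hsz
    exact (le_div_iff₀ hMt).mpr this.le
  intro u hu v hv
  obtain ⟨hu0, hu1⟩ := hu
  obtain ⟨hv0, hv1⟩ := hv
  have huv0 : 0 < u * v := mul_pos hu0 hv0
  have huv1 : u * v ≤ 1 := by nlinarith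
  have hLuv : h * v ^ (p + ε) * L u ≤ L (u * v) := by
    refine le_of_tendsto_of_tendsto
      ((hL u ⟨hu0, hu1⟩).const_mul (h * v ^ (p + ε))) (hL (u * v) ⟨huv0, huv1⟩) ?_
    filter_upwards [ht_inf.eventually_ge_atTop (1 / (u * v))] with n hn
    have hMt := hMx (t n) (ht_ge n)
    have huvz : 1 ≤ v * (u * t n) := by
      have h1 := (div_le_iff₀ huv0).mp hn
      nlinarith [h1]
    have hr := ratio v hv0 hv1 (u * t n) huvz
    have heq : v * (u * t n) = u * v * t n := by ring
    rw [heq] at hr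
    show h * v ^ (p + ε) * (M (u * t n) / M (t n)) ≤ M (u * v * t n) / M (t n)
    calc h * v ^ (p + ε) * (M (u * t n) / M (t n))
        = (h * v ^ (p + ε) * M (u * t n)) / M (t n) := by ring
      _ ≤ M (u * v * t n) / M (t n) := by have := hr.le; gcongr
  have hLu : 0 < L u := lt_of_lt_of_le
    (mul_pos hh (Real.rpow_pos_of_pos hu0 _)) (ratio' u hu0 hu1)
  have hd : 0 < v ^ (p + ε) * L u := mul_pos (Real.rpow_pos_of_pos hv0 _) hLu
  rw [ge_iff_le, le_div_iff₀ hd]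
  calc h * (v ^ (p + ε) * L u) = h * v ^ (p + ε) * L u := by ring
    _ ≤ L (u * v) := hLuv
end

section
/- Let g ∈ L¹[0,1] be nonnegative with ‖g‖₁ ≤ 1. Then there exists an increasing sequence of positive integers (n_k) with n_{k+1} ≥ 2·n_k such that, defining the nondecreasing function R : [0,∞) → [1,∞) which is piecewise linear with R(n) = 1 for 0 ≤ n ≤ n₁ and R(n) = k for n_k < n ≤ n_{k+1} (n integer), one has R(u) → ∞ as u → ∞ and ∫₀¹ g(t)·R(g(t)) dt < ∞. -/
/-!
Choose doubling thresholds `n k` so large that `∫_{n k ≤ |g|} |g| ≤ 2⁻ᵏ`, which is possible since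
these tail integrals of an integrable function tend to zero. On `[j, j + 1]` the weight `R` is at
most `R (j + 1) ≤ 1 + #{k | n k ≤ j}`, hence `|g| R(|g|) ≤ |g| + ∑ₖ |g| 𝟙_{n k ≤ |g|}`, whose
integral is at most `‖g‖₁ + 2`; and `|g R(g)| ≤ |g| R(|g|)` because `R ≥ 1` is monotone.
-/

open Filter Set MeasureTheory

namespace ValleePoussin

noncomputable def piecewiseLinear (a : ℕ → ℝ) (x : ℝ) : ℝ :=
  a ⌊x⌋₊ + (x - ⌊x⌋₊) * (a (⌊x⌋₊ + 1) - a ⌊x⌋₊)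

section piecewiseLinear

variable {a : ℕ → ℝ}

@[simp]
lemma piecewiseLinear_natCast (a : ℕ → ℝ) (j : ℕ) : piecewiseLinear a j = a j := by
  simp [piecewiseLinear]

lemma piecewiseLinear_natCast_add (a : ℕ → ℝ) (j : ℕ) {s : ℝ} (hs : s ∈ Icc (0 : ℝ) 1) :
    piecewiseLinear a (j + s) =
      (1 - s) * piecewiseLinear a j + s * piecewiseLinear a (j + 1) := by
  rcases hs.2.eq_or_lt with rfl | hs1
  · simp
  · have hfloor : ⌊(j : ℝ) + s⌋₊ = j := by
      rw [Nat.floor_eq_iff (by linarith [hs.1])]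
      constructor <;> linarith [hs.1]
    rw [piecewiseLinear, hfloor, piecewiseLinear_natCast, ← Nat.cast_add_one,
      piecewiseLinear_natCast]
    ring

lemma piecewiseLinear_le_succ_floor (ha : Monotone a) (x : ℝ) :
    piecewiseLinear a x ≤ a (⌊x⌋₊ + 1) := by
  have hstep : 0 ≤ a (⌊x⌋₊ + 1) - a ⌊x⌋₊ := sub_nonneg.2 (ha (Nat.le_succ _))
  have hfract : x - ⌊x⌋₊ ≤ 1 := by linarith [Nat.lt_floor_add_one x]
  unfold piecewiseLinear
  nlinarith

lemma floor_le_piecewiseLinear (ha : Monotone a) {x : ℝ} (hx : 0 ≤ x) :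
    a ⌊x⌋₊ ≤ piecewiseLinear a x := by
  have hstep : 0 ≤ a (⌊x⌋₊ + 1) - a ⌊x⌋₊ := sub_nonneg.2 (ha (Nat.le_succ _))
  have hfract : 0 ≤ x - ⌊x⌋₊ := sub_nonneg.2 (Nat.floor_le hx)
  unfold piecewiseLinear
  nlinarith

lemma monotone_piecewiseLinear (ha : Monotone a) : Monotone (piecewiseLinear a) := by
  intro x y hxy
  rcases (Nat.floor_le_floor (a := x) (b := y) hxy).eq_or_lt with hfloor | hfloor
  · have hstep : 0 ≤ a (⌊x⌋₊ + 1) - a ⌊x⌋₊ := sub_nonneg.2 (ha (Nat.le_succ _))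
    rw [piecewiseLinear, piecewiseLinear, ← hfloor]
    nlinarith
  · have hy : 0 ≤ y := zero_le_one.trans (Nat.floor_pos.1 (Nat.zero_lt_of_lt hfloor))
    calc piecewiseLinear a x ≤ a (⌊x⌋₊ + 1) := piecewiseLinear_le_succ_floor ha x
      _ ≤ a ⌊y⌋₊ := ha hfloor
      _ ≤ piecewiseLinear a y := floor_le_piecewiseLinear ha hy

lemma le_piecewiseLinear (ha : Monotone a) (h01 : a 0 = a 1) (x : ℝ) :
    a 0 ≤ piecewiseLinear a x := by
  rcases le_total 0 x with hx | hx
  · exact (ha (Nat.zero_le _)).trans (floor_le_piecewiseLinear ha hx)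
  · simp [piecewiseLinear, Nat.floor_of_nonpos hx, h01]

lemma tendsto_piecewiseLinear (ha : Monotone a) (h : Tendsto a atTop atTop) :
    Tendsto (piecewiseLinear a) atTop atTop :=
  tendsto_atTop_mono' atTop
    ((eventually_ge_atTop 0).mono fun _ hx => floor_le_piecewiseLinear ha hx)
    (h.comp tendsto_nat_floor_atTop)

end piecewiseLinear

noncomputable def levelIndex (n : ℕ → ℕ) (j : ℕ) : ℕ := sInf {k | j ≤ n k}

noncomputable def weight (n : ℕ → ℕ) : ℝ → ℝ :=
  piecewiseLinear fun j => max 1 (levelIndex n j : ℝ)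

section levelIndex

variable {n : ℕ → ℕ}

lemma levelIndex_le {j k : ℕ} (h : j ≤ n k) : levelIndex n j ≤ k := Nat.sInf_le h

lemma levelIndex_eq_zero {j : ℕ} (h : j ≤ n 0) : levelIndex n j = 0 :=
  Nat.le_zero.1 (levelIndex_le h)

lemma lt_levelIndex_iff (hn : StrictMono n) {j k : ℕ} : k < levelIndex n j ↔ n k < j := by
  refine ⟨fun hk => not_le.1 (Nat.notMem_of_lt_sInf (s := {k | j ≤ n k}) hk),
    fun hk => not_le.1 fun hle => ?_⟩
  have hmem : j ≤ n (levelIndex n j) := Nat.sInf_mem (s := {k | j ≤ n k}) ⟨j, hn.le_apply⟩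
  exact (hmem.trans (hn.monotone hle)).not_gt hk

lemma levelIndex_eq_succ (hn : StrictMono n) {j k : ℕ} (h₁ : n k < j) (h₂ : j ≤ n (k + 1)) :
    levelIndex n j = k + 1 :=
  le_antisymm (levelIndex_le h₂) ((lt_levelIndex_iff hn).2 h₁)

lemma monotone_levelIndex (hn : StrictMono n) : Monotone (levelIndex n) := fun _ _ hj =>
  le_of_forall_lt fun _ hk => (lt_levelIndex_iff hn).2 (((lt_levelIndex_iff hn).1 hk).trans_le hj)

lemma tendsto_levelIndex (hn : StrictMono n) : Tendsto (levelIndex n) atTop atTop :=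
  (monotone_levelIndex hn).tendsto_atTop_atTop fun k =>
    ⟨n k + 1, ((lt_levelIndex_iff hn).2 (Nat.lt_succ_self _)).le⟩

end levelIndex

section weight

variable {n : ℕ → ℕ}

lemma monotone_max_one_levelIndex (hn : StrictMono n) :
    Monotone fun j => max 1 (levelIndex n j : ℝ) := fun _ _ hj =>
  max_le_max_left 1 (Nat.cast_le.2 (monotone_levelIndex hn hj))

lemma monotone_weight (hn : StrictMono n) : Monotone (weight n) :=
  monotone_piecewiseLinear (monotone_max_one_levelIndex hn)

lemma tendsto_weight (hn : StrictMono n) : Tendsto (weight n) atTop atTop :=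
  tendsto_piecewiseLinear (monotone_max_one_levelIndex hn) <|
    tendsto_atTop_mono (fun _ => le_max_right _ _)
      (tendsto_natCast_atTop_atTop.comp (tendsto_levelIndex hn))

lemma weight_natCast_of_le {j : ℕ} (h : j ≤ n 0) : weight n j = 1 := by
  simp [weight, levelIndex_eq_zero h]

lemma weight_natCast_of_lt_of_le (hn : StrictMono n) {j k : ℕ} (h₁ : n k < j)
    (h₂ : j ≤ n (k + 1)) : weight n j = k + 1 := by
  rw [weight, piecewiseLinear_natCast, levelIndex_eq_succ hn h₁ h₂, Nat.cast_add_one,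
    max_eq_right (le_add_of_nonneg_left k.cast_nonneg)]

lemma one_le_weight (hn : StrictMono n) (x : ℝ) : 1 ≤ weight n x := by
  have h1 : levelIndex n 1 ≤ 1 := levelIndex_le hn.le_apply
  refine (le_max_left _ _).trans
    (le_piecewiseLinear (monotone_max_one_levelIndex hn) ?_ x)
  simp only [levelIndex_eq_zero (Nat.zero_le _), Nat.cast_zero]
  rw [max_eq_left zero_le_one, max_eq_left (by exact_mod_cast h1)]

lemma weight_le_one_add_levelIndex (hn : StrictMono n) (x : ℝ) :
    weight n x ≤ 1 + levelIndex n (⌊x⌋₊ + 1) :=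
  (piecewiseLinear_le_succ_floor (monotone_max_one_levelIndex hn) x).trans
    (max_le (by simp) (by simp))

end weight

section integrability

variable {α : Type*} {mα : MeasurableSpace α} {μ : Measure α} {f : α → ℝ} {n : ℕ → ℕ}

lemma exists_lintegral_indicator_norm_ge_le (hf : Integrable f μ) {ε : ℝ} (hε : 0 < ε) :
    ∃ M : ℕ, ∀ m, M ≤ m →
      ∫⁻ x, ‖{x | (m : ℝ) ≤ ‖f x‖}.indicator f x‖ₑ ∂μ ≤ ENNReal.ofReal ε := by
  obtain ⟨M, -, hM⟩ := (memLp_one_iff_integrable.2 hf).integral_indicator_norm_ge_nonneg_le hε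
  refine ⟨⌈M⌉₊, fun m hm => (lintegral_mono fun x => ?_).trans hM⟩
  simp only [enorm_indicator_eq_indicator_enorm]
  refine Set.indicator_le_indicator_of_subset (fun y hy => ?_) (fun _ => zero_le) x
  exact (Nat.le_ceil M).trans ((Nat.cast_le.2 hm).trans hy)

lemma enorm_mul_weight_le (hn : StrictMono n) (y : ℝ) :
    ‖y * weight n y‖ₑ ≤ ‖y‖ₑ + levelIndex n (⌊‖y‖⌋₊ + 1) * ‖y‖ₑ := by
  have hw : weight n y ≤ 1 + levelIndex n (⌊‖y‖⌋₊ + 1) :=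
    (monotone_weight hn (le_abs_self y)).trans (weight_le_one_add_levelIndex hn _)
  rw [enorm_mul, Real.enorm_eq_ofReal (zero_le_one.trans (one_le_weight hn y)), mul_comm,
    ← one_add_mul]
  gcongr
  calc ENNReal.ofReal (weight n y) ≤ ENNReal.ofReal (1 + levelIndex n (⌊‖y‖⌋₊ + 1)) :=
        ENNReal.ofReal_le_ofReal hw
    _ = 1 + levelIndex n (⌊‖y‖⌋₊ + 1) := by
        rw [ENNReal.ofReal_add zero_le_one (Nat.cast_nonneg _), ENNReal.ofReal_one,
          ENNReal.ofReal_natCast]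

lemma levelIndex_mul_enorm_le_tsum (hn : StrictMono n) (f : α → ℝ) (x : α) :
    levelIndex n (⌊‖f x‖⌋₊ + 1) * ‖f x‖ₑ ≤
      ∑' k, ‖{x | (n k : ℝ) ≤ ‖f x‖}.indicator f x‖ₑ := by
  calc (levelIndex n (⌊‖f x‖⌋₊ + 1) : ENNReal) * ‖f x‖ₑ
      = ∑ k ∈ Finset.range (levelIndex n (⌊‖f x‖⌋₊ + 1)), ‖f x‖ₑ := by simp
    _ = ∑ k ∈ Finset.range (levelIndex n (⌊‖f x‖⌋₊ + 1)),
          ‖{x | (n k : ℝ) ≤ ‖f x‖}.indicator f x‖ₑ := by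
        refine Finset.sum_congr rfl fun k hk => ?_
        have hk' : n k ≤ ⌊‖f x‖⌋₊ :=
          Nat.lt_succ_iff.1 ((lt_levelIndex_iff hn).1 (Finset.mem_range.1 hk))
        rw [Set.indicator_of_mem (s := {x | (n k : ℝ) ≤ ‖f x‖})
          ((Nat.le_floor_iff (norm_nonneg _)).1 hk')]
    _ ≤ _ := ENNReal.sum_le_tsum _

theorem integrable_mul_weight (hf : Integrable f μ) (hn : StrictMono n)
    (htail : ∑' k, ∫⁻ x, ‖{x | (n k : ℝ) ≤ ‖f x‖}.indicator f x‖ₑ ∂μ ≠ ⊤) :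
    Integrable (fun x => f x * weight n (f x)) μ := by
  have htail_meas (k : ℕ) :
      AEMeasurable (fun x => ‖{x | (n k : ℝ) ≤ ‖f x‖}.indicator f x‖ₑ) μ :=
    (hf.aemeasurable.indicator₀
      (nullMeasurableSet_le aemeasurable_const hf.aemeasurable.norm)).enorm
  refine ⟨hf.1.mul
    ((monotone_weight hn).measurable.comp_aemeasurable hf.aemeasurable).aestronglyMeasurable, ?_⟩
  rw [hasFiniteIntegral_iff_enorm]
  calc ∫⁻ x, ‖f x * weight n (f x)‖ₑ ∂μ
      ≤ ∫⁻ x, (‖f x‖ₑ + ∑' k, ‖{x | (n k : ℝ) ≤ ‖f x‖}.indicator f x‖ₑ) ∂μ :=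
        lintegral_mono fun x => (enorm_mul_weight_le hn (f x)).trans
          (add_le_add_right (levelIndex_mul_enorm_le_tsum hn f x) _)
    _ = ∫⁻ x, ‖f x‖ₑ ∂μ + ∑' k, ∫⁻ x, ‖{x | (n k : ℝ) ≤ ‖f x‖}.indicator f x‖ₑ ∂μ := by
        rw [lintegral_add_left' hf.aemeasurable.enorm, lintegral_tsum htail_meas]
    _ < ⊤ := ENNReal.add_lt_top.2 ⟨hf.2, htail.lt_top⟩

end integrability

lemma exists_strictMono_two_mul_le (M : ℕ → ℕ) :
    ∃ n : ℕ → ℕ, StrictMono n ∧ (∀ k, 0 < n k) ∧ (∀ k, 2 * n k ≤ n (k + 1)) ∧ ∀ k, M k ≤ n k := by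
  set n : ℕ → ℕ := fun k => 2 ^ k * (1 + ∑ i ∈ Finset.range (k + 1), M i)
  have hpos (k : ℕ) : 0 < n k := by positivity
  have hdouble (k : ℕ) : 2 * n k ≤ n (k + 1) := by
    simp only [n, pow_succ, Finset.sum_range_succ _ (k + 1)]
    nlinarith [Nat.zero_le (M (k + 1)), Nat.zero_le (2 ^ k)]
  refine ⟨n, strictMono_nat_of_lt_succ fun k => by linarith [hpos k, hdouble k], hpos, hdouble,
    fun k => ?_⟩
  calc M k ≤ ∑ i ∈ Finset.range (k + 1), M i :=
        Finset.single_le_sum (fun _ _ => Nat.zero_le _) (Finset.self_mem_range_succ k)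
    _ ≤ 1 * (1 + ∑ i ∈ Finset.range (k + 1), M i) := by omega
    _ ≤ n k := Nat.mul_le_mul_right _ Nat.one_le_two_pow

end ValleePoussin

open ValleePoussin in
theorem stmt_8_general (g : ℝ → ℝ)
    (hg_int : IntegrableOn g (Set.Icc (0:ℝ) 1)) :
    ∃ n : ℕ → ℕ, StrictMono n ∧ (∀ k, 0 < n k) ∧ (∀ k, 2 * n k ≤ n (k + 1)) ∧
      ∃ R : ℝ → ℝ,
        Monotone R ∧ (∀ x, 1 ≤ R x) ∧ Tendsto R atTop atTop ∧
        (∀ j : ℕ, j ≤ n 0 → R j = 1) ∧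
        (∀ k : ℕ, ∀ j : ℕ, n k < j → j ≤ n (k + 1) → R j = (k + 1 : ℝ)) ∧
        (∀ j : ℕ, ∀ s ∈ Set.Icc (0:ℝ) 1, R (j + s) = (1 - s) * R j + s * R (j + 1)) ∧
        IntegrableOn (fun t => g t * R (g t)) (Set.Icc (0:ℝ) 1) := by
  choose M hM using fun k : ℕ => exists_lintegral_indicator_norm_ge_le hg_int (ε := (1 / 2) ^ k) (by positivity)
  obtain ⟨n, hn, hpos, hdouble, hMn⟩ := exists_strictMono_two_mul_le M
  refine ⟨n, hn, hpos, hdouble, weight n, monotone_weight hn, one_le_weight hn, tendsto_weight hn,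
    fun j => weight_natCast_of_le, fun k j => weight_natCast_of_lt_of_le hn,
    fun j s => piecewiseLinear_natCast_add _ j, integrable_mul_weight hg_int hn ?_⟩
  refine ne_top_of_le_ne_top ?_ (ENNReal.tsum_le_tsum fun k => hM k (n k) (hMn k))
  rw [← ENNReal.ofReal_tsum_of_nonneg (fun k => by positivity) summable_geometric_two]
  exact ENNReal.ofReal_ne_top

theorem stmt_8 (g : ℝ → ℝ)
    (hg_int : IntegrableOn g (Set.Icc (0:ℝ) 1))
    (hg_nonneg : ∀ t, 0 ≤ g t)
    (hg_norm : (∫ t in Set.Icc (0:ℝ) 1, g t) ≤ 1) :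
    ∃ n : ℕ → ℕ, StrictMono n ∧ (∀ k, 0 < n k) ∧ (∀ k, 2 * n k ≤ n (k + 1)) ∧
      ∃ R : ℝ → ℝ,
        Monotone R ∧ (∀ x, 1 ≤ R x) ∧ Tendsto R atTop atTop ∧
        (∀ j : ℕ, j ≤ n 0 → R j = 1) ∧
        (∀ k : ℕ, ∀ j : ℕ, n k < j → j ≤ n (k + 1) → R j = (k + 1 : ℝ)) ∧
        (∀ j : ℕ, ∀ s ∈ Set.Icc (0:ℝ) 1, R (j + s) = (1 - s) * R j + s * R (j + 1)) ∧
        IntegrableOn (fun t => g t * R (g t)) (Set.Icc (0:ℝ) 1) :=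
  stmt_8_general g hg_int
end

section
/- Let M be an Orlicz function and 1 ≤ p < ∞ with sup_{t,s ≥ 1} M(t)·s^p / M(ts) < ∞ (i.e., p < α_M^∞ or p witnesses the sup in the definition of the lower index). Suppose ψ : (0,1] → (0,∞) satisfies ψ(s) = lim_{n→∞} M(s·tₙ)/M(tₙ) for a sequence tₙ ↑ ∞, tₙ ≥ 1. Then sup_{0<u,v≤1} ψ(uv)/(v^p·ψ(u)) < ∞, i.e., the lower Matuszewska–Orlicz index at zero of ψ satisfies α_ψ^0 ≥ p. -/
open Filter Set Real

/-! Applying the lower-index bound at the point `u v tₙ` with dilation `1 / v` gives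
`M (u v tₙ) ≤ C v^p M (u tₙ)`; dividing by `M tₙ` and letting `n → ∞` yields `ψ (u v) ≤ C v^p ψ u`.
As `M → ∞`, the quotients `M (s tₙ) / M tₙ` are eventually positive, so `ψ ≥ 0` and this bound
can be divided by `v^p ψ u`; when `ψ u = 0` the quotient is the junk value `0`. -/

theorem le_mul_rpow_mul_of_lowerIndex_bound {M : ℝ → ℝ} {p C : ℝ}
    (hC : ∀ x : ℝ, 1 ≤ x → ∀ s : ℝ, 1 ≤ s → M x * s ^ p / M (x * s) ≤ C)
    {v x : ℝ} (hv0 : 0 < v) (hv1 : v ≤ 1) (hvx : 1 ≤ v * x) (hMx : 0 < M x) :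
    M (v * x) ≤ C * v ^ p * M x := by
  have h := hC (v * x) hvx v⁻¹ ((one_le_inv₀ hv0).mpr hv1)
  have hx : v * x * v⁻¹ = x := by field_simp
  rwa [hx, inv_rpow hv0.le, div_le_iff₀ hMx, ← div_eq_mul_inv,
    div_le_iff₀ (rpow_pos_of_pos hv0 p), mul_right_comm] at h

section Limits

variable {ι : Type*} {l : Filter ι} {M : ℝ → ℝ} {t : ι → ℝ}

theorem eventually_pos_comp_mul (hM : Tendsto M atTop atTop) (ht : Tendsto t l atTop)
    {s : ℝ} (hs : 0 < s) : ∀ᶠ i in l, 0 < M (s * t i) :=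
  (hM.comp (ht.const_mul_atTop hs)).eventually_gt_atTop 0

theorem nonneg_of_tendsto_ratio [l.NeBot] (hM : Tendsto M atTop atTop)
    (ht : Tendsto t l atTop) {s a : ℝ} (hs : 0 < s)
    (hlim : Tendsto (fun i => M (s * t i) / M (t i)) l (nhds a)) : 0 ≤ a := by
  refine ge_of_tendsto hlim ?_
  filter_upwards [eventually_pos_comp_mul hM ht hs, (hM.comp ht).eventually_gt_atTop 0]
    with i hMs hMt using (div_pos hMs hMt).le

theorem tendsto_ratio_le_mul_rpow_mul [l.NeBot] {p C : ℝ}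
    (hC : ∀ x : ℝ, 1 ≤ x → ∀ s : ℝ, 1 ≤ s → M x * s ^ p / M (x * s) ≤ C)
    (hM : Tendsto M atTop atTop) (ht : Tendsto t l atTop) {u v a b : ℝ}
    (hu : 0 < u) (hv0 : 0 < v) (hv1 : v ≤ 1)
    (hlim_uv : Tendsto (fun i => M (u * v * t i) / M (t i)) l (nhds a))
    (hlim_u : Tendsto (fun i => M (u * t i) / M (t i)) l (nhds b)) :
    a ≤ C * v ^ p * b := by
  refine le_of_tendsto_of_tendsto hlim_uv (hlim_u.const_mul _) ?_
  filter_upwards [(ht.const_mul_atTop (mul_pos hu hv0)).eventually_ge_atTop 1,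
    eventually_pos_comp_mul hM ht hu, (hM.comp ht).eventually_gt_atTop 0]
    with i h1 hMu hMt
  have key := le_mul_rpow_mul_of_lowerIndex_bound hC hv0 hv1
    (by rwa [mul_comm u v, mul_assoc] at h1) hMu
  rw [mul_comm u v, mul_assoc, ← mul_div_assoc]
  exact div_le_div_of_nonneg_right key hMt.le

end Limits

theorem div_mul_le_max_zero_of_le_mul_mul {a b c C : ℝ} (hb : 0 < b) (hc : 0 ≤ c)
    (h : a ≤ C * b * c) : a / (b * c) ≤ max C 0 := by
  rcases hc.eq_or_lt with rfl | hc
  · simp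
  rw [div_le_iff₀ (mul_pos hb hc)]
  nlinarith [le_max_left C 0, mul_pos hb hc]

theorem stmt_19_general (M : ℝ → ℝ) (p : ℝ) (ψ : ℝ → ℝ) (t : ℕ → ℝ)
    (hM_inf : Tendsto M atTop atTop)
    (hsup : ∃ C : ℝ, ∀ x : ℝ, 1 ≤ x → ∀ s : ℝ, 1 ≤ s → M x * s ^ p / M (x * s) ≤ C)
    (ht_inf : Tendsto t atTop atTop)
    (hψ : ∀ s ∈ Set.Ioc (0:ℝ) 1,
      Tendsto (fun n => M (s * t n) / M (t n)) atTop (nhds (ψ s))) :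
    ∃ C : ℝ, ∀ u ∈ Set.Ioc (0:ℝ) 1, ∀ v ∈ Set.Ioc (0:ℝ) 1,
      ψ (u * v) / (v ^ p * ψ u) ≤ C := by
  obtain ⟨C, hC⟩ := hsup
  refine ⟨max C 0, fun u hu v hv => ?_⟩
  have huv : u * v ∈ Set.Ioc (0:ℝ) 1 := ⟨mul_pos hu.1 hv.1, mul_le_one₀ hu.2 hv.1.le hv.2⟩
  exact div_mul_le_max_zero_of_le_mul_mul (rpow_pos_of_pos hv.1 p)
    (nonneg_of_tendsto_ratio hM_inf ht_inf hu.1 (hψ u hu))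
    (by simpa only [mul_assoc] using
      tendsto_ratio_le_mul_rpow_mul hC hM_inf ht_inf hu.1 hv.1 hv.2 (hψ _ huv) (hψ u hu))

theorem stmt_19 (M : ℝ → ℝ) (p : ℝ) (ψ : ℝ → ℝ) (t : ℕ → ℝ)
    (hM_mono : MonotoneOn M (Set.Ici 0))
    (hM_conv : ConvexOn ℝ (Set.Ici 0) M)
    (hM_cont : ContinuousOn M (Set.Ici 0))
    (hM0 : M 0 = 0)
    (hM_inf : Tendsto M atTop atTop)
    (hp : 1 ≤ p)
    (hsup : ∃ C : ℝ, ∀ x : ℝ, 1 ≤ x → ∀ s : ℝ, 1 ≤ s → M x * s ^ p / M (x * s) ≤ C)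
    (ht_mono : Monotone t) (ht_ge : ∀ n, 1 ≤ t n)
    (ht_inf : Tendsto t atTop atTop)
    (hψ : ∀ s ∈ Set.Ioc (0:ℝ) 1,
      Tendsto (fun n => M (s * t n) / M (t n)) atTop (nhds (ψ s))) :
    ∃ C : ℝ, ∀ u ∈ Set.Ioc (0:ℝ) 1, ∀ v ∈ Set.Ioc (0:ℝ) 1,
      ψ (u * v) / (v ^ p * ψ u) ≤ C :=
  stmt_19_general M p ψ t hM_inf hsup ht_inf hψ
end
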